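/- arXiv:2404.02267 — 3 statements merged into one kernel-verified Lean document; each statement's English description precedes it below -/
import Mathlib

section
/- Let G_bip be a bipartite graph with parts X, Y of size 2z each (n = 4z). If the maximum matching M of G_bip has size |M| < z, then there exist disjoint sets L ⊆ X and R ⊆ Y with |L| ≥ z, |R| ≥ z, and no edge of G_bip between L and R. -/
/-!
Let `S` be the set of vertices covered by a maximum matching `M`. Maximality makes the uncovered
vertices independent: an edge between two of them could be added to `M`. Since every edge of `M`
crosses between the parts, `M` covers as many left as right vertices, so `|S| < 2z` means that
fewer than `z` vertices of each part are covered. The uncovered left and right vertices are then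
the required sets `L` and `R`.
-/

open Finset

namespace SimpleGraph.Subgraph

variable {V : Type*} {G : SimpleGraph V}

theorem IsMatching.not_adj_of_notMem_verts [Finite V] {M : G.Subgraph} (hM : M.IsMatching)
    (hmax : ∀ M' : G.Subgraph, M'.IsMatching → M'.verts.ncard ≤ M.verts.ncard)
    {u v : V} (hu : u ∉ M.verts) (hv : v ∉ M.verts) : ¬G.Adj u v := by
  intro huv
  have hdisj : Disjoint M.verts {u, v} := by
    simp [Set.disjoint_insert_right, hu, hv]
  have hM' : (M ⊔ G.subgraphOfAdj huv).IsMatching := by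
    refine hM.sup (.subgraphOfAdj huv) ?_
    rwa [hM.support_eq_verts, (IsMatching.subgraphOfAdj huv).support_eq_verts]
  have hle := hmax _ hM'
  rw [verts_sup, subgraphOfAdj_verts, Set.ncard_union_eq hdisj, Set.ncard_pair huv.ne] at hle
  omega

theorem IsMatching.card_le_card_of_forall_exists_adj {ι κ : Type*} {M : G.Subgraph}
    (hM : M.IsMatching) {i : ι → V} (hi : i.Injective) (j : κ → V) {s : Finset ι}
    {t : Finset κ} (h : ∀ a ∈ s, ∃ b ∈ t, M.Adj (i a) (j b)) : #s ≤ #t :=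
  card_le_card_of_forall_subsingleton _ h fun _ _ _ ha _ ha' =>
    hi (hM.eq_of_adj_right ha.2 ha'.2)

theorem IsMatching.card_toLeft_eq_card_toRight {α β : Type*} {G : SimpleGraph (α ⊕ β)}
    (hbip : ∀ a b, G.Adj a b → (a.isLeft ∧ b.isRight) ∨ (a.isRight ∧ b.isLeft))
    {M : G.Subgraph} (hM : M.IsMatching) [Fintype M.verts] :
    #M.verts.toFinset.toLeft = #M.verts.toFinset.toRight := by
  apply le_antisymm
  · refine hM.card_le_card_of_forall_exists_adj Sum.inl_injective Sum.inr fun a ha => ?_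
    obtain ⟨w, hw⟩ := (hM (by simpa using ha)).exists
    rcases w with a' | b
    · simpa using hbip _ _ (M.adj_sub hw)
    · exact ⟨b, by simpa using M.edge_vert hw.symm, hw⟩
  · refine hM.card_le_card_of_forall_exists_adj Sum.inr_injective Sum.inl fun b hb => ?_
    obtain ⟨w, hw⟩ := (hM (by simpa using hb)).exists
    rcases w with a | b'
    · exact ⟨a, by simpa using M.edge_vert hw.symm, hw⟩
    · simpa using hbip _ _ (M.adj_sub hw)

end SimpleGraph.Subgraph

/-- If the maximum matching of a bipartite graph with parts of size `2z` each has
size less than `z`, then there are sets `L` of left vertices and `R` of right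
vertices, each of cardinality at least `z`, with no edge between `L` and `R`.
(A matching of size `< z` covers `< 2z` vertices.) -/
theorem stmt8 (z : ℕ) (G : SimpleGraph (Fin (2 * z) ⊕ Fin (2 * z)))
    (hbip : ∀ a b, G.Adj a b → (a.isLeft ∧ b.isRight) ∨ (a.isRight ∧ b.isLeft))
    (M : G.Subgraph) (hM : M.IsMatching)
    (hmax : ∀ M' : G.Subgraph, M'.IsMatching → M'.verts.ncard ≤ M.verts.ncard)
    (hsmall : M.verts.ncard < 2 * z) :
    ∃ (L R : Finset (Fin (2 * z))), z ≤ L.card ∧ z ≤ R.card ∧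
      ∀ x ∈ L, ∀ y ∈ R, ¬ G.Adj (Sum.inl x) (Sum.inr y) := by
  classical
  set S := M.verts.toFinset
  have hbalanced : #S.toLeft = #S.toRight := hM.card_toLeft_eq_card_toRight hbip
  have hcovered : #S.toLeft + #S.toRight < 2 * z := by
    rwa [card_toLeft_add_card_toRight, ← Set.ncard_eq_toFinset_card']
  refine ⟨S.toLeftᶜ, S.toRightᶜ, ?_, ?_, fun x hx y hy =>
    hM.not_adj_of_notMem_verts hmax (by simpa [S] using hx) (by simpa [S] using hy)⟩
  · rw [card_compl, Fintype.card_fin]; omega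
  · rw [card_compl, Fintype.card_fin]; omega
end

section
/- Fix constants d₁ > 0 and β ≤ 1/4 and p ≥ (log n)/√n. Let G_bip be a random bipartite graph with parts X, Y of size n/2 each (n = 4z even), edges open independently with probabilities p(u,v) satisfying: for every vertex u and every set S of size ≥ βn on the opposite side, Σ_{w∈S} p(u,w) ≥ d₁ |S| p. Then P(maximum matching of G_bip has size ≥ z) ≥ 1 − 4^n exp(−d₁ n² p / 16). -/
/-!
If the random bipartite graph has no matching of size `z`, then by (the deficiency form of)
Hall's theorem there are `z`-sets `S ⊆ X` and `T ⊆ Y` with no open edge between them. For fixed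
`S`, `T`, independence and `1 - x ≤ exp (-x)` bound the probability that all edges of `S × T` are
closed by `exp (-∑ p(u,v))`, and the niceness condition (applicable since `|T| = z ≥ βn`) gives
`∑ p(u,v) ≥ d₁ z² p = d₁ n² p / 16`. A union bound over the at most `4 ^ n` pairs `(S, T)`
finishes the proof.
-/

open Finset MeasureTheory ProbabilityTheory

section Matching

variable {α β : Type*}

def IsBipartiteMatching (r : α → β → Prop) (M : Finset (α × β)) : Prop :=
  (∀ e ∈ M, r e.1 e.2) ∧ Set.InjOn Prod.fst (M : Set (α × β)) ∧
    Set.InjOn Prod.snd (M : Set (α × β))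

theorem IsBipartiteMatching.mono {r : α → β → Prop} {M M' : Finset (α × β)}
    (hM : IsBipartiteMatching r M) (h : M' ⊆ M) : IsBipartiteMatching r M' :=
  ⟨fun e he => hM.1 e (h he), hM.2.1.mono (by simpa using h), hM.2.2.mono (by simpa using h)⟩

theorem IsBipartiteMatching.exists_fin_indexing {r : α → β → Prop} {M : Finset (α × β)}
    {k : ℕ} (hM : IsBipartiteMatching r M) (hk : #M = k) :
    ∃ f : Fin k → α × β, (∀ i, r (f i).1 (f i).2) ∧
      ∀ i j, i ≠ j → (f i).1 ≠ (f j).1 ∧ (f i).2 ≠ (f j).2 := by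
  subst hk
  refine ⟨fun i => M.equivFin.symm i, fun i => hM.1 _ (M.equivFin.symm i).2, fun i j hij => ?_⟩
  have hne : (M.equivFin.symm i : α × β) ≠ M.equivFin.symm j := by
    simpa [Subtype.ext_iff] using hij
  exact ⟨fun h => hne (hM.2.1 (M.equivFin.symm i).2 (M.equivFin.symm j).2 h),
    fun h => hne (hM.2.2 (M.equivFin.symm i).2 (M.equivFin.symm j).2 h)⟩

variable [Fintype α] [Fintype β]

/-- Hall's theorem with deficiency `d`, obtained from Hall's theorem by adding `d` new vertices
adjacent to everything. -/
theorem exists_isBipartiteMatching_of_card_le_card_biUnion_add [DecidableEq β]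
    (t : α → Finset β) (d : ℕ) (h : ∀ s : Finset α, #s ≤ #(s.biUnion t) + d) :
    ∃ M, IsBipartiteMatching (fun a b => b ∈ t a) M ∧ Fintype.card α ≤ #M + d := by
  classical
  let t' : α → Finset (β ⊕ Fin d) := fun a => (t a).disjSum univ
  have hall : ∀ s : Finset α, #s ≤ #(s.biUnion t') := by
    intro s
    rcases s.eq_empty_or_nonempty with rfl | ⟨a, ha⟩
    · simp
    have hsub : (s.biUnion t).disjSum univ ⊆ s.biUnion t' := by
      rintro (b | i) hb
      · obtain ⟨a', ha', hb⟩ := mem_biUnion.1 (inl_mem_disjSum.1 hb)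
        exact mem_biUnion.2 ⟨a', ha', inl_mem_disjSum.2 hb⟩
      · exact mem_biUnion.2 ⟨a, ha, inr_mem_disjSum.2 (mem_univ i)⟩
    exact (h s).trans (by simpa using card_le_card hsub)
  obtain ⟨F, hFinj, hFt⟩ := (all_card_le_biUnion_card_iff_exists_injective t').1 hall
  let M : Finset (α × β) := univ.filter fun e => F e.1 = .inl e.2
  have hM : IsBipartiteMatching (fun a b => b ∈ t a) M := by
    refine ⟨fun e he => ?_, fun e he e' he' h => ?_, fun e he e' he' h => ?_⟩
    · simpa [(mem_filter.1 he).2, t'] using hFt e.1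
    · have h' := (mem_filter.1 he).2.symm.trans ((congrArg F h).trans (mem_filter.1 he').2)
      exact Prod.ext h (Sum.inl_injective h')
    · exact Prod.ext (hFinj ((mem_filter.1 he).2.trans ((congrArg Sum.inl h).trans
        (mem_filter.1 he').2.symm))) h
  refine ⟨M, hM, ?_⟩
  -- `F` embeds `α` into the matched right vertices together with the `d` new ones.
  have hmaps : Set.MapsTo F (univ : Finset α)
      ((M.image Prod.snd).disjSum (univ : Finset (Fin d)) : Set (β ⊕ Fin d)) := by
    intro a _
    cases hFa : F a with
    | inl b => exact inl_mem_disjSum.2 (mem_image.2 ⟨(a, b), by simp [M, hFa], rfl⟩)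
    | inr i => exact inr_mem_disjSum.2 (mem_univ i)
  calc Fintype.card α ≤ #((M.image Prod.snd).disjSum (univ : Finset (Fin d))) :=
        card_le_card_of_injOn F hmaps hFinj.injOn
    _ ≤ #M + d := by simpa using card_image_le

theorem exists_isBipartiteMatching_or_exists_independent (r : α → β → Prop) (k : ℕ)
    (hk : k ≤ Fintype.card α) :
    (∃ M, IsBipartiteMatching r M ∧ #M = k) ∨
      ∃ (s : Finset α) (t : Finset β), Fintype.card α + Fintype.card β < #s + #t + k ∧
        ∀ a ∈ s, ∀ b ∈ t, ¬ r a b := by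
  classical
  let N : α → Finset β := fun a => univ.filter (r a)
  by_cases hall : ∀ s : Finset α, #s ≤ #(s.biUnion N) + (Fintype.card α - k)
  · obtain ⟨M, hM, hcard⟩ := exists_isBipartiteMatching_of_card_le_card_biUnion_add N _ hall
    obtain ⟨M', hM'M, hM'⟩ := exists_subset_card_eq (show k ≤ #M by omega)
    have hM : IsBipartiteMatching r M := by simpa [N] using hM
    exact .inl ⟨M', hM.mono hM'M, hM'⟩
  · obtain ⟨s, hs⟩ := not_forall.1 hall
    refine .inr ⟨s, (s.biUnion N)ᶜ, ?_, fun a ha b hb hab => ?_⟩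
    · have := card_le_univ s
      have := card_le_univ (s.biUnion N)
      rw [card_compl]
      omega
    · exact mem_compl.1 hb (mem_biUnion.2 ⟨a, ha, by simpa [N] using hab⟩)

theorem exists_fin_matching_of_forall_exists_rel {r : α → β → Prop} {k : ℕ}
    (hα : Fintype.card α = 2 * k) (hβ : Fintype.card β = 2 * k)
    (h : ∀ (s : Finset α) (t : Finset β), #s = k → #t = k → ∃ a ∈ s, ∃ b ∈ t, r a b) :
    ∃ f : Fin k → α × β, (∀ i, r (f i).1 (f i).2) ∧
      ∀ i j, i ≠ j → (f i).1 ≠ (f j).1 ∧ (f i).2 ≠ (f j).2 := by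
  rcases exists_isBipartiteMatching_or_exists_independent r k (by omega) with
    ⟨M, hM, hMk⟩ | ⟨s, t, hst, hr⟩
  · exact hM.exists_fin_indexing hMk
  have := card_le_univ s
  have := card_le_univ t
  obtain ⟨s', hs's, hs'⟩ := exists_subset_card_eq (show k ≤ #s by omega)
  obtain ⟨t', ht't, ht'⟩ := exists_subset_card_eq (show k ≤ #t by omega)
  obtain ⟨a, ha, b, hb, hab⟩ := h s' t' hs' ht'
  exact absurd hab (hr a (hs's ha) b (ht't hb))

end Matching

theorem ENNReal.one_sub_ofReal_le_ofReal_exp_neg (q : ℝ) :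
    1 - ENNReal.ofReal q ≤ ENNReal.ofReal (Real.exp (-q)) := by
  rcases le_total 0 q with hq | hq
  · rw [← ENNReal.ofReal_one, ← ENNReal.ofReal_sub _ hq]
    exact ENNReal.ofReal_le_ofReal (by linarith [Real.add_one_le_exp (-q)])
  · rw [ENNReal.ofReal_of_nonpos hq, tsub_zero, ← ENNReal.ofReal_one]
    exact ENNReal.ofReal_le_ofReal (Real.one_le_exp (by linarith))

section RandomEdges

variable {Ω : Type*} [MeasurableSpace Ω] {μ : Measure Ω} [IsProbabilityMeasure μ]

theorem ofReal_one_sub_le_measure_compl {s : Set Ω} {a : ℝ} (ha : 0 ≤ a)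
    (hs : μ s ≤ ENNReal.ofReal a) : ENNReal.ofReal (1 - a) ≤ μ sᶜ :=
  calc ENNReal.ofReal (1 - a) = 1 - ENNReal.ofReal a := by
        rw [ENNReal.ofReal_sub _ ha, ENNReal.ofReal_one]
    _ ≤ 1 - μ s := tsub_le_tsub_left hs 1
    _ ≤ μ sᶜ := tsub_le_iff_left.2 (by simpa using measure_univ_le_add_compl s (μ := μ))

theorem measure_iInter_eq_false_le_exp {ι : Type*} {X : ι → Ω → Bool} {q : ι → ℝ}
    (hX : ∀ i, Measurable (X i)) (hindep : iIndepFun X μ)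
    (hq : ∀ i, μ {ω | X i ω = true} = ENNReal.ofReal (q i)) (E : Finset ι) :
    μ (⋂ i ∈ E, {ω | X i ω = false}) ≤ ENNReal.ofReal (Real.exp (-∑ i ∈ E, q i)) := by
  have hfalse : ∀ i, μ (X i ⁻¹' {false}) = 1 - ENNReal.ofReal (q i) := by
    intro i
    have : X i ⁻¹' {false} = (X i ⁻¹' {true})ᶜ := by ext; simp
    rw [this, prob_compl_eq_one_sub (hX i (measurableSet_singleton true))]
    exact congrArg (1 - ·) (hq i)
  calc μ (⋂ i ∈ E, X i ⁻¹' {false}) = ∏ i ∈ E, (1 - ENNReal.ofReal (q i)) := by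
        rw [hindep.measure_inter_preimage_eq_mul E (fun _ _ => measurableSet_singleton false)]
        exact prod_congr rfl fun i _ => hfalse i
    _ ≤ ∏ i ∈ E, ENNReal.ofReal (Real.exp (-q i)) :=
        prod_le_prod' fun i _ => ENNReal.one_sub_ofReal_le_ofReal_exp_neg (q i)
    _ = ENNReal.ofReal (Real.exp (-∑ i ∈ E, q i)) := by
        rw [← ENNReal.ofReal_prod_of_nonneg fun i _ => (Real.exp_pos _).le, ← Real.exp_sum,
          sum_neg_distrib]

theorem measure_exists_closed_block_le {α β : Type*} [Fintype α] [Fintype β]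
    {X : α × β → Ω → Bool} {q : α × β → ℝ} (hX : ∀ e, Measurable (X e))
    (hindep : iIndepFun X μ) (hq : ∀ e, μ {ω | X e ω = true} = ENNReal.ofReal (q e))
    (k : ℕ) {c : ℝ}
    (hc : ∀ (s : Finset α) (t : Finset β), #s = k → #t = k → c ≤ ∑ e ∈ s ×ˢ t, q e) :
    μ (⋃ s ∈ powersetCard k (univ : Finset α), ⋃ t ∈ powersetCard k (univ : Finset β),
        ⋂ e ∈ s ×ˢ t, {ω | X e ω = false}) ≤
      ENNReal.ofReal (2 ^ (Fintype.card α + Fintype.card β) * Real.exp (-c)) := by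
  have hblock : ∀ s ∈ powersetCard k (univ : Finset α), ∀ t ∈ powersetCard k (univ : Finset β),
      μ (⋂ e ∈ s ×ˢ t, {ω | X e ω = false}) ≤ ENNReal.ofReal (Real.exp (-c)) := fun s hs t ht =>
    (measure_iInter_eq_false_le_exp hX hindep hq _).trans <| ENNReal.ofReal_le_ofReal <|
      Real.exp_le_exp.2 <| neg_le_neg <| hc s t (mem_powersetCard.1 hs).2 (mem_powersetCard.1 ht).2
  have hcount : ((Fintype.card α).choose k * (Fintype.card β).choose k : ℕ) ≤
      2 ^ (Fintype.card α + Fintype.card β) := by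
    rw [pow_add]
    exact Nat.mul_le_mul (Nat.choose_le_two_pow _ _) (Nat.choose_le_two_pow _ _)
  calc _ ≤ ∑ s ∈ powersetCard k (univ : Finset α), ∑ t ∈ powersetCard k (univ : Finset β),
        μ (⋂ e ∈ s ×ˢ t, {ω | X e ω = false}) :=
        (measure_biUnion_finset_le _ _).trans (sum_le_sum fun s _ => measure_biUnion_finset_le _ _)
    _ ≤ ∑ s ∈ powersetCard k (univ : Finset α), ∑ t ∈ powersetCard k (univ : Finset β),
        ENNReal.ofReal (Real.exp (-c)) :=
        sum_le_sum fun s hs => sum_le_sum fun t ht => hblock s hs t ht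
    _ = ((Fintype.card α).choose k * (Fintype.card β).choose k : ℕ) *
        ENNReal.ofReal (Real.exp (-c)) := by simp [card_powersetCard, mul_assoc]
    _ ≤ _ := by
        rw [ENNReal.ofReal_mul (by positivity), ← ENNReal.ofReal_natCast]
        gcongr
        exact_mod_cast hcount

end RandomEdges

theorem stmt9_general {Ω : Type*} [MeasurableSpace Ω] (μ : Measure Ω) [IsProbabilityMeasure μ]
    (z : ℕ) (n : ℕ) (hn : n = 4 * z)
    (β d₁ p : ℝ) (hβ : β ≤ 1 / 4)
    (pr : Fin (2 * z) → Fin (2 * z) → ℝ)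
    (X : Fin (2 * z) × Fin (2 * z) → Ω → Bool)
    (hXmeas : ∀ e, Measurable (X e))
    (hindep : iIndepFun X μ)
    (hdist : ∀ u v, μ {ω | X (u, v) ω = true} = ENNReal.ofReal (pr u v))
    (hniceL : ∀ (u : Fin (2 * z)) (S : Finset (Fin (2 * z))), β * n ≤ S.card →
      d₁ * S.card * p ≤ ∑ w ∈ S, pr u w) :
    ENNReal.ofReal (1 - 4 ^ n * Real.exp (-(d₁ * (n : ℝ) ^ 2 * p / 16))) ≤
      μ {ω | ∃ f : Fin z → Fin (2 * z) × Fin (2 * z),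
        (∀ i, X (f i) ω = true) ∧
        (∀ i j, i ≠ j → (f i).1 ≠ (f j).1 ∧ (f i).2 ≠ (f j).2)} := by
  have hblock : ∀ s t : Finset (Fin (2 * z)), #s = z → #t = z →
      d₁ * (n : ℝ) ^ 2 * p / 16 ≤ ∑ e ∈ s ×ˢ t, pr e.1 e.2 := by
    intro s t hs ht
    have hβt : β * n ≤ #t := by
      rw [ht, hn]; push_cast; nlinarith [(Nat.cast_nonneg z : (0 : ℝ) ≤ z)]
    calc d₁ * (n : ℝ) ^ 2 * p / 16 = #s * (d₁ * #t * p) := by rw [hs, ht, hn]; push_cast; ring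
      _ ≤ ∑ u ∈ s, ∑ v ∈ t, pr u v := by
        simpa using card_nsmul_le_sum s _ _ fun u _ => hniceL u t hβt
      _ = ∑ e ∈ s ×ˢ t, pr e.1 e.2 := (sum_product s t fun e => pr e.1 e.2).symm
  have hbad := measure_exists_closed_block_le hXmeas hindep (fun e => hdist e.1 e.2) z hblock
  have hcount : (2 : ℝ) ^ (Fintype.card (Fin (2 * z)) + Fintype.card (Fin (2 * z))) ≤ 4 ^ n := by
    rw [Fintype.card_fin, hn, ← two_mul, ← mul_assoc]
    exact pow_le_pow_left₀ (by norm_num) (by norm_num) _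
  refine (ofReal_one_sub_le_measure_compl (by positivity) (hbad.trans
    (ENNReal.ofReal_le_ofReal (by gcongr)))).trans (measure_mono fun ω hω => ?_)
  refine exists_fin_matching_of_forall_exists_rel (r := fun u v => X (u, v) ω = true)
    (by simp) (by simp) fun s t hs ht => ?_
  by_contra! hclosed
  refine hω ?_
  simp only [Set.mem_iUnion, Set.mem_iInter, mem_powersetCard]
  exact ⟨s, ⟨subset_univ s, hs⟩, t, ⟨subset_univ t, ht⟩, fun e he => by
    simpa using hclosed e.1 (mem_product.1 he).1 e.2 (mem_product.1 he).2⟩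

/-- With the first niceness condition (constants `β ≤ 1/4`, `d₁ > 0`,
`p ≥ log n / √n`, `n = 4z`), the random bipartite graph with parts of size `2z`
has a matching of size at least `z` (i.e. `z` pairwise vertex-disjoint open
edges) with probability at least `1 - 4^n exp (-d₁ n² p / 16)`. -/
theorem stmt9 {Ω : Type*} [MeasurableSpace Ω] (μ : Measure Ω) [IsProbabilityMeasure μ]
    (z : ℕ) (hz : 0 < z) (n : ℕ) (hn : n = 4 * z)
    (β d₁ p : ℝ) (hβ0 : 0 < β) (hβ : β ≤ 1 / 4) (hd₁ : 0 < d₁)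
    (hp0 : 0 < p) (hp1 : p < 1) (hplog : Real.log n / Real.sqrt n ≤ p)
    (pr : Fin (2 * z) → Fin (2 * z) → ℝ)
    (hpr0 : ∀ u v, 0 ≤ pr u v) (hpr1 : ∀ u v, pr u v ≤ 1)
    (X : Fin (2 * z) × Fin (2 * z) → Ω → Bool)
    (hXmeas : ∀ e, Measurable (X e))
    (hindep : iIndepFun X μ)
    (hdist : ∀ u v, μ {ω | X (u, v) ω = true} = ENNReal.ofReal (pr u v))
    (hniceL : ∀ (u : Fin (2 * z)) (S : Finset (Fin (2 * z))), β * n ≤ S.card →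
      d₁ * S.card * p ≤ ∑ w ∈ S, pr u w)
    (hniceR : ∀ (v : Fin (2 * z)) (S : Finset (Fin (2 * z))), β * n ≤ S.card →
      d₁ * S.card * p ≤ ∑ w ∈ S, pr w v) :
    ENNReal.ofReal (1 - 4 ^ n * Real.exp (-(d₁ * (n : ℝ) ^ 2 * p / 16))) ≤
      μ {ω | ∃ f : Fin z → Fin (2 * z) × Fin (2 * z),
        (∀ i, X (f i) ω = true) ∧
        (∀ i j, i ≠ j → (f i).1 ≠ (f j).1 ∧ (f i).2 ≠ (f j).2)} :=
  stmt9_general μ z n hn β d₁ p hβ pr X hXmeas hindep hdist hniceL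
end

section
/- Let G be the inhomogeneous random graph on n vertices with independent edges of probabilities p(u,v) satisfying the (α,c₁,c₂,p)-good condition, and let S be a fixed set of s vertices with 1 ≤ s ≤ 1/(10 c₂ p). Then the expected number of vertices outside S adjacent in G to at least one vertex of S satisfies (3 c₁ n p s)/4 ≤ E[N_out(S)] ≤ c₂ n p s, for all sufficiently large n. -/
/-!
For `v ∉ S` put `q v = ∑_{u ∈ S} p(u, v)`. The event that `v` has a neighbour in `S` has
probability at most `q v` (union bound) and, by independence and `1 - x ≤ e^{-x}`, at least
`1 - e^{-q v}`. Summing the goodness condition over `u ∈ S` bounds `∑_{v ∉ S} q v` by `c₂ n p s`,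
which is the upper bound.

For the lower bound let `T` consist of the `n - ⌊n/8⌋` vertices outside `S` with the smallest `q`,
and `τ = max_T q`. Goodness gives `∑_T q ≥ (7/8) c₁ n p s`, and the remaining `⌊n/8⌋ - s` vertices
all have `q ≥ τ`. Concavity of `1 - e^{-x}` gives `1 - e^{-q} ≥ (6/7) q` on `T` if `τ ≤ 1/4`, and
`1 - e^{-q} ≥ (1 - e^{-1}) q` if `τ ≤ 1`. For `τ > 1/4` the vertices outside `T` add at least
`1 - e^{-min(τ, 1)}` each, which makes up the difference: `s ≤ 1/(10 c₂ p)` forces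
`c₁ n p s ≤ n/10`, while `s ≤ n/400` once `n` is large.
-/

open MeasureTheory ProbabilityTheory Finset Filter Real
open scoped Classical

theorem Finset.exists_subset_card_eq_forall_le_of_mem_sdiff {ι α : Type*} [LinearOrder α]
    [DecidableEq ι] (f : ι → α) (A : Finset ι) {m : ℕ} (hm : m ≤ #A) :
    ∃ B ⊆ A, #B = m ∧ ∀ b ∈ B, ∀ a ∈ A \ B, f b ≤ f a := by
  induction A using Finset.induction_on_max_value f generalizing m with
  | empty => exact ⟨∅, subset_refl _, by simp at hm ⊢; omega, by simp⟩
  | insert a A haA hmax ih =>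
    rw [card_insert_of_notMem haA] at hm
    rcases hm.lt_or_eq with hlt | rfl
    · obtain ⟨B, hBA, hBm, hB⟩ := ih (Nat.lt_succ_iff.mp hlt)
      refine ⟨B, hBA.trans (subset_insert a A), hBm, fun b hb x hx => ?_⟩
      obtain ⟨hxA, hxB⟩ := mem_sdiff.mp hx
      rcases mem_insert.mp hxA with rfl | hxA
      · exact hmax b (hBA hb)
      · exact hB b hb x (mem_sdiff.mpr ⟨hxA, hxB⟩)
    · exact ⟨insert a A, subset_refl _, card_insert_of_notMem haA, by simp⟩

theorem Real.min_mul_one_sub_exp_neg_le {q t : ℝ} (hq : 0 ≤ q) (ht : 0 < t) :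
    min q t * (1 - exp (-t)) ≤ t * (1 - exp (-q)) := by
  rcases le_total q t with hqt | htq
  · rw [min_eq_left hqt]
    have hchord := convexOn_exp.2 (Set.mem_univ (-t)) (Set.mem_univ 0) (div_nonneg hq ht.le)
      (sub_nonneg.2 ((div_le_one ht).2 hqt)) (add_sub_cancel _ _)
    simp only [smul_eq_mul, mul_zero, add_zero, exp_zero, mul_one, mul_neg,
      div_mul_cancel₀ q ht.ne'] at hchord
    have := mul_le_mul_of_nonneg_left hchord ht.le
    rw [mul_add, ← mul_assoc, mul_div_cancel₀ q ht.ne', mul_sub, mul_div_cancel₀ q ht.ne'] at this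
    linarith
  · rw [min_eq_right htq]
    gcongr

theorem three_quarters_le_sum_one_sub_exp_neg {ι : Type*} {T R : Finset ι} {q : ι → ℝ}
    (hq : ∀ v, 0 ≤ q v) {τ x : ℝ} (hT : ∀ v ∈ T, q v ≤ τ) (hR : ∀ v ∈ R, τ ≤ q v)
    (hTsum : 7 / 8 * x ≤ ∑ v ∈ T, q v) (hRcard : 6 / 5 * x ≤ #R) :
    3 / 4 * x ≤ ∑ v ∈ R, (1 - exp (-q v)) + ∑ v ∈ T, (1 - exp (-q v)) := by
  have hquarter : ∀ v, 6 / 7 * min (q v) (1 / 4) ≤ 1 - exp (-q v) := by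
    intro v
    have h14 : 14 / 11 ≤ exp (1 / 4) := by
      have := quadratic_le_exp_of_nonneg (x := 1 / 4) (by norm_num); linarith
    have : exp (-(1 / 4)) ≤ 11 / 14 := by
      rw [exp_neg, inv_le_comm₀ (exp_pos _) (by norm_num)]; linarith
    have := min_mul_one_sub_exp_neg_le (hq v) (by norm_num : (0 : ℝ) < 1 / 4)
    nlinarith [le_min (hq v) (by norm_num : (0 : ℝ) ≤ 1 / 4)]
  have hone : ∀ v, 79 / 125 * min (q v) 1 ≤ 1 - exp (-q v) := by
    intro v
    have : exp (-1) ≤ 46 / 125 := by have := exp_neg_one_lt_d9; norm_num at this ⊢; linarith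
    have := min_mul_one_sub_exp_neg_le (hq v) one_pos
    nlinarith [le_min (hq v) zero_le_one]
  have hpos : ∀ v, 0 ≤ 1 - exp (-q v) := fun v => by
    simpa using exp_le_one_iff.2 (neg_nonpos.2 (hq v))
  rcases le_or_gt τ (1 / 4) with hτ | hτ
  · have hTbound : 6 / 7 * ∑ v ∈ T, q v ≤ ∑ v ∈ T, (1 - exp (-q v)) := by
      rw [mul_sum]
      refine sum_le_sum fun v hv => ?_
      have := hquarter v
      rwa [min_eq_left ((hT v hv).trans hτ)] at this
    linarith [sum_nonneg fun v (_ : v ∈ R) => hpos v]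
  rcases le_or_gt τ 1 with hτ' | hτ'
  · have hTbound : 79 / 125 * ∑ v ∈ T, q v ≤ ∑ v ∈ T, (1 - exp (-q v)) := by
      rw [mul_sum]
      refine sum_le_sum fun v hv => ?_
      simpa [min_eq_left ((hT v hv).trans hτ')] using hone v
    have hRbound : #R • (3 / 14 : ℝ) ≤ ∑ v ∈ R, (1 - exp (-q v)) := by
      refine card_nsmul_le_sum _ _ _ fun v hv => ?_
      have := hquarter v
      rw [min_eq_right (hτ.le.trans (hR v hv))] at this
      linarith
    rw [nsmul_eq_mul] at hRbound
    linarith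
  · have hRbound : #R • (79 / 125 : ℝ) ≤ ∑ v ∈ R, (1 - exp (-q v)) := by
      refine card_nsmul_le_sum _ _ _ fun v hv => ?_
      simpa [min_eq_right (hτ'.le.trans (hR v hv))] using hone v
    rw [nsmul_eq_mul] at hRbound
    linarith [sum_nonneg fun v (_ : v ∈ T) => hpos v]

theorem ProbabilityTheory.iIndepFun.one_sub_exp_neg_sum_le_measureReal_biUnion
    {ι Ω β : Type*} [MeasurableSpace Ω] [MeasurableSpace β] {μ : Measure Ω}
    [IsProbabilityMeasure μ] {X : ι → Ω → β} (hX : ∀ i, Measurable (X i)) (hind : iIndepFun X μ)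
    {B : Set β} (hB : MeasurableSet B) (F : Finset ι) :
    1 - exp (-∑ i ∈ F, μ.real (X i ⁻¹' B)) ≤ μ.real (⋃ i ∈ F, X i ⁻¹' B) := by
  have hmeas : MeasurableSet (⋃ i ∈ F, X i ⁻¹' B) :=
    F.measurableSet_biUnion fun i _ => hX i hB
  have hmiss : μ.real (⋃ i ∈ F, X i ⁻¹' B)ᶜ = ∏ i ∈ F, (1 - μ.real (X i ⁻¹' B)) := by
    simp_rw [Set.compl_iUnion₂, ← Set.preimage_compl]
    rw [measureReal_def, hind.measure_inter_preimage_eq_mul F fun i _ => hB.compl,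
      ENNReal.toReal_prod]
    exact prod_congr rfl fun i _ => by
      rw [← measureReal_def, Set.preimage_compl, probReal_compl_eq_one_sub (hX i hB)]
  have hprod : ∏ i ∈ F, (1 - μ.real (X i ⁻¹' B)) ≤ exp (-∑ i ∈ F, μ.real (X i ⁻¹' B)) := by
    rw [← sum_neg_distrib, exp_sum]
    exact prod_le_prod (fun i _ => sub_nonneg.2 measureReal_le_one) fun i _ =>
      one_sub_le_exp_neg _
  rw [probReal_compl_eq_one_sub hmeas] at hmiss
  linarith

theorem MeasureTheory.integral_card_filter_mem {ι Ω : Type*} [MeasurableSpace Ω] {μ : Measure Ω}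
    [IsFiniteMeasure μ] (F : Finset ι) {B : ι → Set Ω} (hB : ∀ i ∈ F, MeasurableSet (B i)) :
    ∫ ω, (#{i ∈ F | ω ∈ B i} : ℝ) ∂μ = ∑ i ∈ F, μ.real (B i) := by
  have hind : ∀ ω, (#{i ∈ F | ω ∈ B i} : ℝ) = ∑ i ∈ F, (B i).indicator 1 ω := fun ω => by
    rw [card_filter, Nat.cast_sum]
    exact sum_congr rfl fun i _ => by simp [Set.indicator_apply]
  simp_rw [hind]
  rw [integral_finsetSum _ fun i hi => (integrable_const 1).indicator (hB i hi)]
  exact sum_congr rfl fun i hi => integral_indicator_one (hB i hi)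

theorem mul_le_card_compl {n : ℕ} {α : ℝ} (hα : α ≤ 7 / 8) {S : Finset (Fin n)} (hS : 8 * #S ≤ n) :
    α * n ≤ #Sᶜ := by
  have : 7 * (n : ℝ) ≤ 8 * #Sᶜ := by
    rw [card_compl, Fintype.card_fin]; exact_mod_cast (by omega : 7 * n ≤ 8 * (n - #S))
  nlinarith [(Nat.cast_nonneg n : (0 : ℝ) ≤ n)]

def IsGoodAssignment (n : ℕ) (α c₁ c₂ p : ℝ) (pr : Fin n → Fin n → ℝ) : Prop :=
  ∀ (u : Fin n) (S : Finset (Fin n)), u ∉ S → α * n ≤ S.card →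
    c₁ * S.card * p ≤ ∑ v ∈ S, pr u v ∧ ∑ v ∈ S, pr u v ≤ c₂ * S.card * p

namespace IsGoodAssignment

variable {n : ℕ} {α c₁ c₂ p : ℝ} {pr : Fin n → Fin n → ℝ}

theorem sum_sum_mem_Icc (hgood : IsGoodAssignment n α c₁ c₂ p pr) {S T : Finset (Fin n)}
    (hST : Disjoint S T) (hT : α * n ≤ #T) :
    ∑ v ∈ T, ∑ u ∈ S, pr u v ∈ Set.Icc (c₁ * #T * p * #S) (c₂ * #T * p * #S) := by
  rw [sum_comm]
  have hgoodS : ∀ u ∈ S, _ := fun u hu => hgood u T (disjoint_left.1 hST hu) hT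
  constructor
  · calc c₁ * #T * p * #S = #S • (c₁ * #T * p) := by rw [nsmul_eq_mul]; ring
      _ ≤ _ := card_nsmul_le_sum _ _ _ fun u hu => (hgoodS u hu).1
  · calc _ ≤ #S • (c₂ * #T * p) := sum_le_card_nsmul _ _ _ fun u hu => (hgoodS u hu).2
      _ = c₂ * #T * p * #S := by rw [nsmul_eq_mul]; ring

theorem c₁_le_c₂ (hgood : IsGoodAssignment n α c₁ c₂ p pr) (hp : 0 < p) {u : Fin n}
    {T : Finset (Fin n)} (hu : u ∉ T) (hT : α * n ≤ #T) (hTne : T.Nonempty) : c₁ ≤ c₂ := by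
  have h := (hgood u T hu hT).1.trans (hgood u T hu hT).2
  rw [mul_assoc, mul_assoc] at h
  exact le_of_mul_le_mul_right h (by have := hTne.card_pos; positivity)

theorem sum_compl_sum_le (hgood : IsGoodAssignment n α c₁ c₂ p pr) (hα : α ≤ 7 / 8)
    (hc₂ : 0 ≤ c₂) (hp : 0 ≤ p) {S : Finset (Fin n)} (hS : 8 * #S ≤ n) :
    ∑ v ∈ Sᶜ, ∑ u ∈ S, pr u v ≤ c₂ * n * p * #S :=
  calc ∑ v ∈ Sᶜ, ∑ u ∈ S, pr u v ≤ c₂ * #Sᶜ * p * #S :=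
        (hgood.sum_sum_mem_Icc disjoint_compl_right (mul_le_card_compl hα hS)).2
    _ ≤ c₂ * n * p * #S := by
        gcongr
        exact_mod_cast (card_le_univ Sᶜ).trans_eq (Fintype.card_fin n)

theorem three_quarters_mul_le_sum_compl_one_sub_exp_neg
    (hgood : IsGoodAssignment n α c₁ c₂ p pr) (hα : α ≤ 7 / 8) (hc₁ : 0 ≤ c₁) (hp : 0 < p)
    (hpr : ∀ u v, 0 ≤ pr u v) {S : Finset (Fin n)} (hS : S.Nonempty) (hSn : 400 * #S ≤ n)
    (hSp : c₂ * p * #S ≤ 1 / 10) :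
    3 / 4 * (c₁ * n * p * #S) ≤ ∑ v ∈ Sᶜ, (1 - exp (-∑ u ∈ S, pr u v)) := by
  have hS1 := hS.card_pos
  obtain ⟨T, hTS, hTcard, hTmin⟩ := Sᶜ.exists_subset_card_eq_forall_le_of_mem_sdiff
    (fun v => ∑ u ∈ S, pr u v) (m := n - n / 8) (by rw [card_compl, Fintype.card_fin]; omega)
  have hTne : T.Nonempty := by rw [← card_pos, hTcard]; omega
  obtain ⟨w, hwT, hw⟩ := T.exists_max_image (fun v => ∑ u ∈ S, pr u v) hTne
  have hT : 7 * (n : ℝ) ≤ 8 * #T := by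
    rw [hTcard]; exact_mod_cast (by omega : 7 * n ≤ 8 * (n - n / 8))
  have hR : (n : ℝ) ≤ 8 * (#(Sᶜ \ T) + #S) + 7 := by
    rw [card_sdiff_of_subset hTS, card_compl, Fintype.card_fin, hTcard]
    exact_mod_cast (by omega : n ≤ 8 * (n - #S - (n - n / 8) + #S) + 7)
  have hαT : α * n ≤ #T := by nlinarith [(Nat.cast_nonneg n : (0 : ℝ) ≤ n)]
  obtain ⟨u, hu⟩ := hS
  have hc : c₁ ≤ c₂ := hgood.c₁_le_c₂ hp (fun huT => mem_compl.1 (hTS huT) hu) hαT hTne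
  have hTsum := (hgood.sum_sum_mem_Icc (disjoint_compl_right.mono_right hTS) hαT).1
  have hSn' : 400 * (#S : ℝ) ≤ n := by exact_mod_cast hSn
  have hx : c₁ * n * p * #S ≤ n / 10 := by
    nlinarith [mul_le_mul_of_nonneg_right hc (by positivity : (0 : ℝ) ≤ p * #S * n)]
  rw [← sum_sdiff hTS]
  refine three_quarters_le_sum_one_sub_exp_neg (fun v => sum_nonneg fun u _ => hpr u v)
    (fun v hv => hw v hv) (fun v hv => hTmin w hwT v hv) ?_ ?_
  · nlinarith [mul_le_mul_of_nonneg_right hT (by positivity : (0 : ℝ) ≤ c₁ * p * #S)]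
  · have : (400 : ℝ) ≤ n := by
      have : (1 : ℝ) ≤ #S := by exact_mod_cast hS1
      linarith
    linarith

end IsGoodAssignment

section RandomGraph

variable {n : ℕ} {Ω : Type*} [MeasurableSpace Ω] {μ : Measure Ω} {pr : Fin n → Fin n → ℝ}
  {X : Sym2 (Fin n) → Ω → Bool}

theorem measurableSet_exists_edge (hX : ∀ e, Measurable (X e)) (S : Finset (Fin n)) (v : Fin n) :
    MeasurableSet {ω | ∃ u ∈ S, X s(u, v) ω = true} := by
  rw [show {ω | ∃ u ∈ S, X s(u, v) ω = true} = ⋃ u ∈ S, {ω | X s(u, v) ω = true} by ext; simp]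
  exact S.measurableSet_biUnion fun u _ => measurableSet_eq_fun (hX _) measurable_const

theorem measureReal_edge_eq
    (hXp : ∀ u v : Fin n, μ {ω | X s(u, v) ω = true} = ENNReal.ofReal (pr u v))
    (hpr : ∀ u v, 0 ≤ pr u v) (u v : Fin n) : μ.real {ω | X s(u, v) ω = true} = pr u v := by
  rw [measureReal_def, hXp, ENNReal.toReal_ofReal (hpr u v)]

theorem measureReal_exists_edge_le
    (hXp : ∀ u v : Fin n, μ {ω | X s(u, v) ω = true} = ENNReal.ofReal (pr u v))
    (hpr : ∀ u v, 0 ≤ pr u v) (S : Finset (Fin n)) (v : Fin n) :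
    μ.real {ω | ∃ u ∈ S, X s(u, v) ω = true} ≤ ∑ u ∈ S, pr u v := by
  rw [show {ω | ∃ u ∈ S, X s(u, v) ω = true} = ⋃ u ∈ S, {ω | X s(u, v) ω = true} by ext; simp]
  exact (measureReal_biUnion_finset_le S _).trans_eq
    (sum_congr rfl fun u _ => measureReal_edge_eq hXp hpr u v)

theorem one_sub_exp_neg_sum_le_measureReal_exists_edge [IsProbabilityMeasure μ]
    (hX : ∀ e, Measurable (X e)) (hind : iIndepFun X μ)
    (hXp : ∀ u v : Fin n, μ {ω | X s(u, v) ω = true} = ENNReal.ofReal (pr u v))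
    (hpr : ∀ u v, 0 ≤ pr u v) {S : Finset (Fin n)} {v : Fin n} (hv : v ∉ S) :
    1 - exp (-∑ u ∈ S, pr u v) ≤ μ.real {ω | ∃ u ∈ S, X s(u, v) ω = true} := by
  have hinj : Set.InjOn (fun u => s(u, v)) S := fun a _ b hb hab => by
    rcases Sym2.eq_iff.1 hab with ⟨h, _⟩ | ⟨rfl, rfl⟩
    · exact h
    · exact absurd hb hv
  have hset : {ω | ∃ u ∈ S, X s(u, v) ω = true} = ⋃ e ∈ S.image (s(·, v)), X e ⁻¹' {true} := by
    ext; simp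
  have hsum : ∑ u ∈ S, pr u v = ∑ e ∈ S.image (s(·, v)), μ.real (X e ⁻¹' {true}) := by
    rw [sum_image hinj]
    exact sum_congr rfl fun u _ => (measureReal_edge_eq hXp hpr u v).symm
  rw [hset, hsum]
  exact hind.one_sub_exp_neg_sum_le_measureReal_biUnion hX (measurableSet_singleton true) _

end RandomGraph

theorem tendsto_rpow_mul_self_atTop {r : ℝ} (hr : -1 < r) :
    Tendsto (fun x : ℝ => x ^ r * x) atTop atTop :=
  (tendsto_rpow_atTop (by linarith)).congr' ((eventually_gt_atTop 0).mono fun x hx =>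
    rpow_add_one hx.ne' r)

theorem stmt12_general (α c₁ c₂ C : ℝ) (k : ℕ)
    (hα : α ≤ 7 / 8) (hc₁ : 0 < c₁) (hc₂ : 0 < c₂) (hC : 0 < C)
    (p : ℕ → ℝ)
    (hp : ∀ n : ℕ, p n = C * (n : ℝ) ^ (-(k : ℝ) / ((k : ℝ) + 1))) :
    ∃ N : ℕ, ∀ n ≥ N,
      ∀ (Ω : Type) (_ : MeasurableSpace Ω) (μ : Measure Ω)
        (_ : IsProbabilityMeasure μ)
        (pr : Fin n → Fin n → ℝ) (X : Sym2 (Fin n) → Ω → Bool),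
        (∀ u v, pr u v = pr v u) →
        (∀ u v, 0 ≤ pr u v) → (∀ u v, pr u v ≤ 1) →
        (∀ e, Measurable (X e)) →
        iIndepFun X μ →
        (∀ u v : Fin n, μ {ω | X s(u, v) ω = true} = ENNReal.ofReal (pr u v)) →
        (∀ (u : Fin n) (S : Finset (Fin n)), u ∉ S → α * n ≤ S.card →
          c₁ * S.card * p n ≤ ∑ v ∈ S, pr u v ∧
            ∑ v ∈ S, pr u v ≤ c₂ * S.card * p n) →
        ∀ S : Finset (Fin n), 1 ≤ S.card →
          (S.card : ℝ) ≤ 1 / (10 * c₂ * p n) →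
          3 * c₁ * n * p n * S.card / 4 ≤
              (∫ ω, ((Finset.univ.filter (fun v : Fin n =>
                v ∉ S ∧ ∃ u ∈ S, X s(u, v) ω = true)).card : ℝ) ∂μ) ∧
            (∫ ω, ((Finset.univ.filter (fun v : Fin n =>
                v ∉ S ∧ ∃ u ∈ S, X s(u, v) ω = true)).card : ℝ) ∂μ) ≤
              c₂ * n * p n * S.card := by
  have hr : -1 < -(k : ℝ) / ((k : ℝ) + 1) := by
    rw [neg_div, neg_lt_neg_iff, div_lt_one (by positivity)]; linarith
  obtain ⟨N, hN⟩ := eventually_atTop.1 <|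
    (((tendsto_rpow_mul_self_atTop hr).comp tendsto_natCast_atTop_atTop).const_mul_atTop
      (mul_pos hc₂ hC)).eventually_ge_atTop 40
  refine ⟨N, fun n hn Ω _ μ _ pr X _ hpr _ hX hind hXp hgood S hS hSp => ?_⟩
  replace hgood : IsGoodAssignment n α c₁ c₂ (p n) pr := hgood
  have hlarge : 40 ≤ c₂ * p n * n := (hN n hn).trans_eq (by simp only [Function.comp, hp n]; ring)
  have hpn : 0 < p n := by
    by_contra! h
    nlinarith [mul_nonpos_of_nonneg_of_nonpos hc₂.le h, (Nat.cast_nonneg n : (0 : ℝ) ≤ n)]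
  rw [le_div_iff₀ (by positivity)] at hSp
  have hSn : 400 * #S ≤ n := by exact_mod_cast (by nlinarith : (400 * #S : ℝ) ≤ n)
  have hmean : ∫ ω, (#(univ.filter fun v => v ∉ S ∧ ∃ u ∈ S, X s(u, v) ω = true) : ℝ) ∂μ =
      ∑ v ∈ Sᶜ, μ.real {ω | ∃ u ∈ S, X s(u, v) ω = true} := by
    rw [← integral_card_filter_mem Sᶜ fun v _ => measurableSet_exists_edge hX S v]
    congr! 4 with ω
    ext v
    simp
  rw [hmean]
  constructor
  · calc 3 * c₁ * n * p n * #S / 4 = 3 / 4 * (c₁ * n * p n * #S) := by ring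
      _ ≤ _ := hgood.three_quarters_mul_le_sum_compl_one_sub_exp_neg hα hc₁.le hpn hpr
          (card_pos.1 hS) hSn (by linarith)
      _ ≤ _ := sum_le_sum fun v hv =>
          one_sub_exp_neg_sum_le_measureReal_exists_edge hX hind hXp hpr (mem_compl.1 hv)
  · exact (sum_le_sum fun v _ => measureReal_exists_edge_le hXp hpr S v).trans
      (hgood.sum_compl_sum_le hα hc₂.le hpn.le (by omega))

/-- For an `(α, c₁, c₂, p)`-good assignment with `α ≤ 7/8`, `p = C n^{-k/(k+1)}`,
and a fixed set `S` of `s` vertices with `1 ≤ s ≤ 1/(10 c₂ p)`, the expected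
number of vertices outside `S` adjacent to some vertex of `S` satisfies
`3 c₁ n p s / 4 ≤ E[N_out(S)] ≤ c₂ n p s` for all `n` large. -/
theorem stmt12 (α c₁ c₂ C : ℝ) (k : ℕ) (hk : 1 ≤ k)
    (hα0 : 0 < α) (hα : α ≤ 7 / 8) (hc₁ : 0 < c₁) (hc₂ : 0 < c₂) (hC : 0 < C)
    (p : ℕ → ℝ)
    (hp : ∀ n : ℕ, p n = C * (n : ℝ) ^ (-(k : ℝ) / ((k : ℝ) + 1))) :
    ∃ N : ℕ, ∀ n ≥ N,
      ∀ (Ω : Type) (_ : MeasurableSpace Ω) (μ : Measure Ω)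
        (_ : IsProbabilityMeasure μ)
        (pr : Fin n → Fin n → ℝ) (X : Sym2 (Fin n) → Ω → Bool),
        (∀ u v, pr u v = pr v u) →
        (∀ u v, 0 ≤ pr u v) → (∀ u v, pr u v ≤ 1) →
        (∀ e, Measurable (X e)) →
        iIndepFun X μ →
        (∀ u v : Fin n, μ {ω | X s(u, v) ω = true} = ENNReal.ofReal (pr u v)) →
        (∀ (u : Fin n) (S : Finset (Fin n)), u ∉ S → α * n ≤ S.card →
          c₁ * S.card * p n ≤ ∑ v ∈ S, pr u v ∧
            ∑ v ∈ S, pr u v ≤ c₂ * S.card * p n) →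
        ∀ S : Finset (Fin n), 1 ≤ S.card →
          (S.card : ℝ) ≤ 1 / (10 * c₂ * p n) →
          3 * c₁ * n * p n * S.card / 4 ≤
              (∫ ω, ((Finset.univ.filter (fun v : Fin n =>
                v ∉ S ∧ ∃ u ∈ S, X s(u, v) ω = true)).card : ℝ) ∂μ) ∧
            (∫ ω, ((Finset.univ.filter (fun v : Fin n =>
                v ∉ S ∧ ∃ u ∈ S, X s(u, v) ω = true)).card : ℝ) ∂μ) ≤
              c₂ * n * p n * S.card :=
  stmt12_general α c₁ c₂ C k hα hc₁ hc₂ hC p hp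
end
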